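/- For any small set A, any infinite A-indiscernible sequences I, J, and any infinite order types O and O': I ≈_A J if and only if there are sequences K₀, L₀, K₁, …, L_{n−1}, K_n such that K₀ = I and K_n = J; for 0 < i < n, K_i has order type O; for i < n, L_i has order type O'; and for each i < n, both K_i + L_i and K_{i+1} + L_i are A-indiscernible. -/

import Mathlib

open FirstOrder Cardinal

universe u v w

namespace BddUltra

variable (L : FirstOrder.Language.{u, u}) (M : Type u) [L.Structure M]

/-- The automorphism group of `M` (composition as multiplication). -/
instance : Group (M ≃[L] M) where
  mul f g := f.comp g
  one := Language.Equiv.refl L M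
  inv := Language.Equiv.symm
  mul_assoc f g h := by ext x; rfl
  one_mul f := by ext x; rfl
  mul_one f := by ext x; rfl
  inv_mul_cancel f := by ext x; exact f.toEquiv.symm_apply_apply x

/-- The cardinality `|T|` of the theory: the cardinality of the language plus `ℵ₀`. -/
def cardT : Cardinal.{u} := L.card + ℵ₀

/-- Two tuples realize the same complete type over `∅`. -/
def SameType {α : Type v} (a b : α → M) : Prop :=
  ∀ φ : L.Formula α, φ.Realize a ↔ φ.Realize b

/-- Two tuples realize the same complete type over the set `A ⊆ M` of parameters. -/
def SameTypeOver (A : Set M) {α : Type v} (a b : α → M) : Prop :=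
  ∀ φ : L.Formula (↥A ⊕ α),
    φ.Realize (Sum.elim (Subtype.val : ↥A → M) a) ↔
      φ.Realize (Sum.elim (Subtype.val : ↥A → M) b)

theorem SameType.comp {α : Type v} {γ : Type w} {a b : α → M} (h : SameType L M a b)
    (g : γ → α) : SameType L M (a ∘ g) (b ∘ g) := by
  intro φ
  have := h (φ.relabel g)
  rwa [Language.Formula.realize_relabel, Language.Formula.realize_relabel] at this

/-- An invariant equivalence relation of arity `α` on `α`-tuples from `M`. -/
structure IER (α : Type u) : Type u where
  rel : (α → M) → (α → M) → Prop
  equiv : Equivalence rel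
  invariant : ∀ a b c d : α → M,
    SameType L M (Sum.elim a b) (Sum.elim c d) → (rel a b ↔ rel c d)

def IER.setoid {α : Type u} (E : IER L M α) : Setoid (α → M) := ⟨E.rel, E.equiv⟩

/-- The pair (juxtaposition) of two invariant equivalence relations. -/
def IER.prod {α β : Type u} (E : IER L M α) (F : IER L M β) : IER L M (α ⊕ β) where
  rel x y := E.rel (x ∘ Sum.inl) (y ∘ Sum.inl) ∧ F.rel (x ∘ Sum.inr) (y ∘ Sum.inr)
  equiv := ⟨fun _ => ⟨E.equiv.refl _, F.equiv.refl _⟩,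
    fun h => ⟨E.equiv.symm h.1, F.equiv.symm h.2⟩,
    fun h h' => ⟨E.equiv.trans h.1 h'.1, F.equiv.trans h.2 h'.2⟩⟩
  invariant := by
    intro a b c d h
    have e1 : ∀ (x : α ⊕ β → M) (y : α ⊕ β → M),
        (Sum.elim x y) ∘ (Sum.map Sum.inl Sum.inl : α ⊕ α → (α ⊕ β) ⊕ (α ⊕ β))
          = Sum.elim (x ∘ Sum.inl) (y ∘ Sum.inl) := by
      intro x y; funext i; cases i <;> rfl
    have e2 : ∀ (x : α ⊕ β → M) (y : α ⊕ β → M),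
        (Sum.elim x y) ∘ (Sum.map Sum.inr Sum.inr : β ⊕ β → (α ⊕ β) ⊕ (α ⊕ β))
          = Sum.elim (x ∘ Sum.inr) (y ∘ Sum.inr) := by
      intro x y; funext i; cases i <;> rfl
    have h1 := h.comp (L := L) (M := M) (Sum.map Sum.inl Sum.inl)
    have h2 := h.comp (L := L) (M := M) (Sum.map Sum.inr Sum.inr)
    rw [e1, e1] at h1
    rw [e2, e2] at h2
    exact and_congr (E.invariant _ _ _ _ h1) (F.invariant _ _ _ _ h2)

/-- The set of automorphisms fixing the ultraimaginary `a_E`. -/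
def autU {α : Type u} (E : IER L M α) (a : α → M) : Set (M ≃[L] M) :=
  {σ | E.rel a (⇑σ ∘ a)}

/-- The set of automorphisms fixing the set `A` pointwise. -/
def autSet (A : Set M) : Set (M ≃[L] M) := {σ | ∀ x ∈ A, σ x = x}

/-- The set of automorphisms fixing the set `A` and the tuple `u` pointwise. -/
def autSetTup (A : Set M) {γ : Type v} (u : γ → M) : Set (M ≃[L] M) :=
  {σ | (∀ x ∈ A, σ x = x) ∧ ∀ i, σ (u i) = u i}

/-- The ultraimaginary `b_F` is bounded over a parameter set whose pointwise
stabilizer is `X`: the `X`-orbit of `b` meets fewer than `κ` classes of `F`. -/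
def BddU (κ : Cardinal.{u}) (X : Set (M ≃[L] M)) {β : Type u} (F : IER L M β)
    (b : β → M) : Prop :=
  ∃ S : Set (β → M), #S < κ ∧ ∀ σ ∈ X, ∃ s ∈ S, F.rel (⇑σ ∘ b) s

/-- The cardinality of the orbit of the ultraimaginary `b_F` under the set `X`
of automorphisms. -/
def orbitCard (X : Set (M ≃[L] M)) {β : Type u} (F : IER L M β) (b : β → M) :
    Cardinal.{u} :=
  #(Set.range fun σ : X => Quotient.mk F.setoid (⇑σ.1 ∘ b))

/-- `b ⫝ᵇᵘ_A c`, expressed in terms of the pointwise stabilizers `XA`, `XAb`, `XAc` of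
`A`, `Ab` and `Ac`: an ultraimaginary is bounded over `Ab` and over `Ac` iff it is
bounded over `A`. -/
def IndepBU (κ : Cardinal.{u}) (XA XAb XAc : Set (M ≃[L] M)) : Prop :=
  ∀ (δ : Type u) (H : IER L M δ) (d : δ → M),
    (BddU L M κ XAb H d ∧ BddU L M κ XAc H d) ↔ BddU L M κ XA H d

/-- The set of automorphisms fixing an elementary substructure pointwise. -/
def autES (N : L.ElementarySubstructure M) : Set (M ≃[L] M) :=
  autSet L M (N : Set M)

/-- `Autf(𝕄/x)` where `X = Aut(𝕄/x)`: the subgroup generated by all pointwise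
stabilizers of small models that are contained in `X`. -/
def autfGen (κ : Cardinal.{u}) (X : Set (M ≃[L] M)) : Subgroup (M ≃[L] M) :=
  Subgroup.closure {σ | ∃ N : L.ElementarySubstructure M,
    #(N : Set M) < κ ∧ autES L M N ⊆ X ∧ σ ∈ autES L M N}

/-- The group of Lascar strong automorphisms over the set `A ⊆ M`: generated by the
pointwise stabilizers of small models containing `A`. -/
def lascarGrp (κ : Cardinal.{u}) (A : Set M) : Subgroup (M ≃[L] M) :=
  Subgroup.closure {σ | ∃ N : L.ElementarySubstructure M,
    #(N : Set M) < κ ∧ A ⊆ (N : Set M) ∧ σ ∈ autES L M N}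

/-- κ-saturation: every finitely realizable set of formulas over a parameter tuple of
arity `< κ`, in `< κ` many variables, is realized. -/
def Saturated (κ : Cardinal.{u}) : Prop :=
  ∀ (α β : Type u), #α < κ → #β < κ → ∀ (a : α → M) (p : Set (L.Formula (α ⊕ β))),
    (∀ s : Finset (L.Formula (α ⊕ β)), ↑s ⊆ p →
      ∃ b : β → M, ∀ φ ∈ s, φ.Realize (Sum.elim a b)) →
    ∃ b : β → M, ∀ φ ∈ p, φ.Realize (Sum.elim a b)

/-- Strong κ-homogeneity: tuples of arity `< κ` with the same type over `∅` are
conjugate under an automorphism. -/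
def Homog (κ : Cardinal.{u}) : Prop :=
  ∀ (α : Type u) (a b : α → M), #α < κ → SameType L M a b →
    ∃ σ : M ≃[L] M, ∀ i, σ (a i) = b i

/-- `M` is a monster model with bound `κbar`: `κbar` is a sufficiently large
(uncountable, regular, strong limit, above `|T|`) cardinal, and `M` is
`κbar`-saturated and strongly `κbar`-homogeneous. -/
structure Monster (κbar : Cardinal.{u}) : Prop where
  aleph0_lt : ℵ₀ < κbar
  isRegular : κbar.IsRegular
  strongLimit : ∀ ρ : Cardinal.{u}, ρ < κbar → 2 ^ ρ < κbar
  lang_lt : L.card < κbar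
  saturated : Saturated L M κbar
  homog : Homog L M κbar

/-- A hyperimaginary: the class of a countable tuple under a countably
type-definable (over `∅`) equivalence relation. -/
structure Hyp : Type u where
  rep : ℕ → M
  fmls : Set (L.Formula (ℕ ⊕ ℕ))
  countable : fmls.Countable
  equiv : Equivalence fun a b : ℕ → M => ∀ φ ∈ fmls, φ.Realize (Sum.elim a b)

/-- The automorphisms fixing each hyperimaginary in the set `A`. -/
def autHyp (A : Set (Hyp L M)) : Set (M ≃[L] M) :=
  {σ | ∀ h ∈ A, ∀ φ ∈ h.fmls, φ.Realize (Sum.elim h.rep (⇑σ ∘ h.rep))}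

/-- The automorphisms fixing each hyperimaginary in `A` and the tuple `u` pointwise. -/
def autHypTup (A : Set (Hyp L M)) {γ : Type v} (u : γ → M) : Set (M ≃[L] M) :=
  {σ | σ ∈ autHyp L M A ∧ ∀ i, σ (u i) = u i}

/-- Flattening of a finite subsequence of a sequence of tuples into a single tuple. -/
def flatten {ι : Type v} {β : Type w} (f : ι → β → M) {n : ℕ} (s : Fin n → ι) :
    Fin n × β → M := fun p => f (s p.1) p.2

/-- A sequence of tuples is `A`-indiscernible (`A ⊆ M` a set of real parameters). -/
def IndiscOver (A : Set M) {ι : Type v} [Preorder ι] {β : Type w} (f : ι → β → M) : Prop :=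
  ∀ (n : ℕ) (s t : Fin n → ι), StrictMono s → StrictMono t →
    SameTypeOver L M A (flatten M f s) (flatten M f t)

/-- Two sequences have the same Ehrenfeucht–Mostowski type over `A ⊆ M`. -/
def SameEMOver (A : Set M) {ι : Type v} [Preorder ι] {ι' : Type w} [Preorder ι']
    {β : Type u} (f : ι → β → M) (g : ι' → β → M) : Prop :=
  ∀ (n : ℕ) (s : Fin n → ι) (t : Fin n → ι'), StrictMono s → StrictMono t →
    SameTypeOver L M A (flatten M f s) (flatten M g t)

/-- A sequence of tuples is `A`-indiscernible, for `A` a set of hyperimaginaries: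
any two increasing tuples from the sequence are conjugate under `Aut(𝕄/A)`. -/
def IndiscOverHyp (A : Set (Hyp L M)) {ι : Type v} [Preorder ι] {β : Type w}
    (f : ι → β → M) : Prop :=
  ∀ (n : ℕ) (s t : Fin n → ι), StrictMono s → StrictMono t →
    ∃ σ ∈ autHyp L M A, ∀ (i : Fin n) (x : β), σ (f (s i) x) = f (t i) x

/-- Two sequences have the same EM-type over the set `A` of hyperimaginaries. -/
def SameEMOverHyp (A : Set (Hyp L M)) {ι : Type v} [Preorder ι] {ι' : Type w} [Preorder ι']
    {β : Type u} (f : ι → β → M) (g : ι' → β → M) : Prop :=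
  ∀ (n : ℕ) (s : Fin n → ι) (t : Fin n → ι'), StrictMono s → StrictMono t →
    ∃ σ ∈ autHyp L M A, ∀ (i : Fin n) (x : β), σ (f (s i) x) = g (t i) x

/-- A sequence of `β`-tuples from `N`, indexed by an arbitrary small linear order. -/
structure Seq (N : Type u) (β : Type u) : Type (u + 1) where
  idx : Type u
  [ord : LinearOrder idx]
  val : idx → β → N

attribute [instance] Seq.ord

/-- Concatenation `I + J` of sequences. -/
def Seq.concat {N β : Type u} (I J : Seq N β) : Seq N β where
  idx := I.idx ⊕ₗ J.idx
  val := fun x => Sum.elim I.val J.val (ofLex x)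

/-- The sequence `I` flattened into a single tuple. -/
def Seq.flat {N β : Type u} (I : Seq N β) : I.idx × β → N := fun p => I.val p.1 p.2

/-- The image `σ · I` of a sequence under an automorphism. -/
def Seq.map {β : Type u} (σ : M ≃[L] M) (I : Seq M β) : Seq M β where
  idx := I.idx
  ord := I.ord
  val := fun i x => σ (I.val i x)

/-- The sequence `(b_i)_{i < ω}` packaged as a `Seq`. -/
def Seq.ofNat {N β : Type u} (b : ℕ → β → N) : Seq N β where
  idx := ULift.{u} ℕ
  val := fun n => b n.down

/-- `I ∼_A J`: both sequences are infinite and `I + J` or `J + I` is `A`-indiscernible. -/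
def SimSeq (A : Set M) {β : Type u} (I J : Seq M β) : Prop :=
  Infinite I.idx ∧ Infinite J.idx ∧
    (IndiscOver L M A (I.concat J).val ∨ IndiscOver L M A (J.concat I).val)

/-- `I ≈_A J`: the transitive closure of `∼_A`. -/
def ApproxSeq (A : Set M) {β : Type u} : Seq M β → Seq M β → Prop :=
  Relation.TransGen (SimSeq L M A)

/-- `I ∼_A J` for `A` a set of hyperimaginaries. -/
def SimSeqHyp (A : Set (Hyp L M)) {β : Type u} (I J : Seq M β) : Prop :=
  Infinite I.idx ∧ Infinite J.idx ∧
    (IndiscOverHyp L M A (I.concat J).val ∨ IndiscOverHyp L M A (J.concat I).val)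

/-- `I ≈_A J` for `A` a set of hyperimaginaries. -/
def ApproxSeqHyp (A : Set (Hyp L M)) {β : Type u} : Seq M β → Seq M β → Prop :=
  Relation.TransGen (SimSeqHyp L M A)

/-- `u ⫝ᵇᵘ_A v` for tuples `u`, `v` over a set `A ⊆ M` of real parameters. -/
def IndepBUReal (κ : Cardinal.{u}) (A : Set M) {γ : Type v} {δ : Type w}
    (x : γ → M) (y : δ → M) : Prop :=
  IndepBU L M κ (autSet L M A) (autSetTup L M A x) (autSetTup L M A y)

/-- `u ⫝ᵇᵘ_A v` for tuples `u`, `v` over a set `A` of hyperimaginaries. -/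
def IndepBUHyp (κ : Cardinal.{u}) (A : Set (Hyp L M)) {γ : Type v} {δ : Type w}
    (x : γ → M) (y : δ → M) : Prop :=
  IndepBU L M κ (autHyp L M A) (autHypTup L M A x) (autHypTup L M A y)

/-- A total `⫝ᵇᵘ`-Morley sequence over the set `A ⊆ M`. -/
def TotalMorleyReal (κ : Cardinal.{u}) (A : Set M) {β : Type u} (b : ℕ → β → M) : Prop :=
  IndiscOver L M A b ∧
    ∀ I J : Seq M β, #I.idx < κ → #J.idx < κ →
      SameEMOver L M A ((I.concat J).val) b →
        IndepBUReal L M κ A I.flat J.flat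

/-- A total `⫝ᵇᵘ`-Morley sequence over the set `A` of hyperimaginaries. -/
def TotalMorleyHyp (κ : Cardinal.{u}) (A : Set (Hyp L M)) {β : Type u}
    (b : ℕ → β → M) : Prop :=
  IndiscOverHyp L M A b ∧
    ∀ I J : Seq M β, #I.idx < κ → #J.idx < κ →
      SameEMOverHyp L M A ((I.concat J).val) b →
        IndepBUHyp L M κ A I.flat J.flat

/-- `tp(b/Ac)` divides over `A`. -/
def Divides (A : Set M) {β : Type v} {γ : Type w} (b : β → M) (c : γ → M) : Prop :=
  ∃ ci : ℕ → γ → M, ci 0 = c ∧ IndiscOver L M A ci ∧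
    ¬∃ b' : β → M, ∀ (i : ℕ) (φ : L.Formula (↥A ⊕ (β ⊕ γ))),
      φ.Realize (Sum.elim (Subtype.val : ↥A → M) (Sum.elim b c)) →
        φ.Realize (Sum.elim (Subtype.val : ↥A → M) (Sum.elim b' (ci i)))

/-- The partition relation `λ → (β)^{<ω}_γ`. -/
def ArrowRel (lam : Cardinal.{u}) (ot : Ordinal.{u}) (c : Cardinal.{u}) : Prop :=
  ∀ f : Finset lam.ord.ToType → c.ord.ToType,
    ∃ X : Set lam.ord.ToType, Nonempty (↥X ≃o ot.ToType) ∧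
      ∀ s t : Finset lam.ord.ToType, ↑s ⊆ X → ↑t ⊆ X → s.card = t.card → f s = f t

/-- The Lascar strong automorphism group over a set `A` of hyperimaginaries:
generated by pointwise stabilizers of small models fixing every element of `A`. -/
def lascarHypGrp (κ : Cardinal.{u}) (A : Set (Hyp L M)) : Subgroup (M ≃[L] M) :=
  Subgroup.closure {σ | ∃ N : L.ElementarySubstructure M,
    #(N : Set M) < κ ∧ autES L M N ⊆ autHyp L M A ∧ σ ∈ autES L M N}

/-- `b_F ⫝ᵇᵘ_{a_E} c_G` for ultraimaginaries. -/
def IndepU (κ : Cardinal.{u}) {α β γ : Type u} (E : IER L M α) (a : α → M)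
    (F : IER L M β) (b : β → M) (G : IER L M γ) (c : γ → M) : Prop :=
  IndepBU L M κ (autU L M E a) (autU L M E a ∩ autU L M F b)
    (autU L M E a ∩ autU L M G c)

/-! An `≈_A`-path `I = X₀ ∼ X₁ ∼ ⋯ ∼ X_k = J` may be assumed to consist of small sequences
(pass to countable subsequences). For a step `X ∼ Y`, say with `X + Y` indiscernible,
compactness extends `X + Y` by a sequence `L` of order type `O'`, and then `X + L` and `Y + L`
are both indiscernible. An inner `X_i` now stands in front of two such tails; compactness
replaces it by a sequence of order type `O` standing in front of both, since finite pieces of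
the new sequence can be sampled from `X_i`. Conversely a chain gives `K_i ∼ L_i ∼ K_{i+1}`;
when it has length `0` one still needs `I ≈_A I`, again obtained by extending `I`. -/

theorem mk_sum_lt {κ : Cardinal.{u}} (hκ : ℵ₀ ≤ κ) {α γ : Type u} (hα : #α < κ)
    (hγ : #γ < κ) : #(α ⊕ γ) < κ := by
  simpa using Cardinal.add_lt_of_lt hκ hα hγ

theorem mk_prod_lt {κ : Cardinal.{u}} (hκ : ℵ₀ ≤ κ) {α γ : Type u} (hα : #α < κ)
    (hγ : #γ < κ) : #(α × γ) < κ := by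
  simpa using Cardinal.mul_lt_of_lt hκ hα hγ

theorem exists_strictMonoOn_of_finite {α γ : Type*} [LinearOrder α] [LinearOrder γ]
    [Infinite γ] {s : Set α} (hs : s.Finite) : ∃ g : α → γ, StrictMonoOn g s := by
  classical
  have := hs.to_subtype
  obtain ⟨e⟩ := nonempty_orderEmbedding_of_finite_infinite s γ
  refine ⟨fun a => if h : a ∈ s then e ⟨a, h⟩ else Classical.arbitrary γ,
    fun a ha b hb hab => ?_⟩
  simp only [dif_pos ha, dif_pos hb]
  exact e.strictMono (Subtype.mk_lt_mk.2 hab)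

theorem strictMonoOn_lexMap {α β γ δ : Type*} [LinearOrder α] [LinearOrder β] [Preorder γ]
    [Preorder δ] {e : α → γ} {f : β → δ} {s : Set α} (he : StrictMonoOn e s)
    (hf : StrictMono f) :
    StrictMonoOn (fun z : α ⊕ₗ β => toLex (Sum.map e f (ofLex z)))
      {z | ∀ a, ofLex z = Sum.inl a → a ∈ s} := by
  rintro (a | b) ha (a' | b') ha' h
  · exact Sum.Lex.inl_lt_inl_iff.2 (he (ha a rfl) (ha' a' rfl) (Sum.Lex.inl_lt_inl_iff.1 h))
  · exact Sum.Lex.inl_lt_inr _ _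
  · exact absurd h Sum.Lex.not_inr_lt_inl
  · exact Sum.Lex.inr_lt_inr_iff.2 (hf (Sum.Lex.inr_lt_inr_iff.1 h))

theorem reflTransGen_of_fin_chain {α : Type*} {r : α → α → Prop} :
    ∀ {n : ℕ} (f : Fin (n + 1) → α), (∀ i : Fin n, r (f i.castSucc) (f i.succ)) →
      Relation.ReflTransGen r (f 0) (f (Fin.last n))
  | 0, _, _ => .refl
  | n + 1, f, h => by
    refine .tail (reflTransGen_of_fin_chain (f ∘ Fin.castSucc) fun i => ?_) ?_
    · simpa only [Function.comp_apply, Fin.succ_castSucc] using h i.castSucc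
    · simpa only [Function.comp_apply, Fin.succ_last] using h (Fin.last n)

def SubSeq {N β : Type u} (X' X : Seq N β) : Prop :=
  ∃ e : X'.idx → X.idx, StrictMono e ∧ ∀ i, X'.val i = X.val (e i)

section SubSeq

variable {N β : Type u}

theorem SubSeq.refl (X : Seq N β) : SubSeq X X :=
  ⟨id, strictMono_id, fun _ => rfl⟩

theorem subSeq_concat_left (X Y : Seq N β) : SubSeq X (X.concat Y) :=
  ⟨fun i => toLex (Sum.inl i), Sum.Lex.inl_strictMono, fun _ => rfl⟩

theorem subSeq_concat_right (X Y : Seq N β) : SubSeq Y (X.concat Y) :=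
  ⟨fun i => toLex (Sum.inr i), Sum.Lex.inr_strictMono, fun _ => rfl⟩

theorem exists_countable_subSeq {X : Seq N β} (hX : Infinite X.idx) :
    ∃ X', SubSeq X' X ∧ Infinite X'.idx ∧ #X'.idx ≤ ℵ₀ :=
  ⟨⟨Set.range (Infinite.natEmbedding X.idx), fun i => X.val i.1⟩,
    ⟨Subtype.val, Subtype.strictMono_coe _, fun _ => rfl⟩,
    (Set.infinite_range_of_injective (Infinite.natEmbedding X.idx).injective).to_subtype,
    Cardinal.mk_le_aleph0_iff.2 (Set.countable_range _).to_subtype⟩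

end SubSeq

section

variable {L M}

theorem SameTypeOver.comp {A : Set M} {α : Type v} {γ : Type w} {a b : α → M}
    (h : SameTypeOver L M A a b) (g : γ → α) : SameTypeOver L M A (a ∘ g) (b ∘ g) := by
  have := SameType.comp L M (show SameType L M _ _ from h) (Sum.map id g)
  rwa [Sum.elim_comp_map, Sum.elim_comp_map, Function.comp_id] at this

theorem SameTypeOver.map_equiv {A : Set M} (σ : M ≃[L] M) (hσ : ∀ x ∈ A, σ x = x)
    {α : Type v} {a b : α → M} (h : SameTypeOver L M A a b) :
    SameTypeOver L M A (σ ∘ a) (σ ∘ b) := by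
  have hfix : ∀ c : α → M,
      Sum.elim (Subtype.val : A → M) (σ ∘ c) = σ ∘ Sum.elim Subtype.val c := by
    intro c
    funext z
    rcases z with ⟨x, hx⟩ | i
    · exact (hσ x hx).symm
    · rfl
  intro φ
  rw [hfix, hfix, Language.StrongHomClass.realize_formula,
    Language.StrongHomClass.realize_formula]
  exact h φ

theorem Monster.exists_equiv_of_sameTypeOver {κ : Cardinal.{u}} (mon : Monster L M κ)
    {A : Set M} (hA : #A < κ) {α : Type u} (hα : #α < κ) {a b : α → M}
    (h : SameTypeOver L M A a b) :
    ∃ σ : M ≃[L] M, (∀ x ∈ A, σ x = x) ∧ ∀ i, σ (a i) = b i := by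
  obtain ⟨σ, hσ⟩ := mon.homog _ _ _ (mk_sum_lt mon.isRegular.aleph0_le hA hα) h
  exact ⟨σ, fun x hx => hσ (Sum.inl ⟨x, hx⟩), fun i => hσ (Sum.inr i)⟩

section Indiscernible

variable {A : Set M} {ι : Type*} [Preorder ι] {β : Type*} {f : ι → β → M}

theorem IndiscOver.comp (h : IndiscOver L M A f) {ι' : Type*} [Preorder ι'] {g : ι' → ι}
    (hg : StrictMono g) : IndiscOver L M A (f ∘ g) :=
  fun n s t hs ht => h n (g ∘ s) (g ∘ t) (hg.comp hs) (hg.comp ht)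

theorem IndiscOver.map_equiv (h : IndiscOver L M A f) (σ : M ≃[L] M)
    (hσ : ∀ x ∈ A, σ x = x) : IndiscOver L M A (fun i x => σ (f i x)) :=
  fun n s t hs ht => (h n s t hs ht).map_equiv σ hσ

theorem IndiscOver.sameTypeOver_of_finite (h : IndiscOver L M A f) {D : Type*}
    [LinearOrder D] [Finite D] {s t : D → ι} (hs : StrictMono s) (ht : StrictMono t) :
    SameTypeOver L M A (fun p : D × β => f (s p.1) p.2) (fun p => f (t p.1) p.2) := by
  have := Fintype.ofFinite D
  let e := Fintype.orderIsoFinOfCardEq D rfl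
  have hflat : ∀ u : D → ι, flatten M f (u ∘ e) ∘ Prod.map e.symm id =
      fun p : D × β => f (u p.1) p.2 := fun u => funext fun p => by simp [flatten]
  rw [← hflat s, ← hflat t]
  exact (h _ _ _ (hs.comp e.strictMono) (ht.comp e.strictMono)).comp _

end Indiscernible

section Sequences

variable {A : Set M} {β : Type u}

theorem IndiscOver.concat_of_subSeq {X Y X' Y' : Seq M β}
    (h : IndiscOver L M A (X.concat Y).val) (hX : SubSeq X' X) (hY : SubSeq Y' Y) :
    IndiscOver L M A (X'.concat Y').val := by
  obtain ⟨e, he, hev⟩ := hX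
  obtain ⟨f, hf, hfv⟩ := hY
  have hval : (X'.concat Y').val =
      (X.concat Y).val ∘ fun z : X'.idx ⊕ₗ Y'.idx => toLex (Sum.map e f (ofLex z)) := by
    funext z
    rcases z with i | i
    exacts [hev i, hfv i]
  rw [hval]
  exact h.comp fun a b hab => strictMonoOn_lexMap (s := Set.univ) (he.strictMonoOn _) hf
    (fun _ _ => trivial) (fun _ _ => trivial) hab

theorem SimSeq.mono {X Y X' Y' : Seq M β} (h : SimSeq L M A X Y) (hX : SubSeq X' X)
    (hY : SubSeq Y' Y) (hX' : Infinite X'.idx) (hY' : Infinite Y'.idx) :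
    SimSeq L M A X' Y' :=
  ⟨hX', hY', h.2.2.imp (·.concat_of_subSeq hX hY) (·.concat_of_subSeq hY hX)⟩

theorem ApproxSeq.exists_small_path {κ : Cardinal.{u}} (hκ : ℵ₀ < κ) {X Y : Seq M β}
    (h : ApproxSeq L M A X Y) (hY : #Y.idx < κ) {X' : Seq M β} (hX' : SubSeq X' X)
    (hX'inf : Infinite X'.idx) (hX'sm : #X'.idx < κ) :
    ∃ (n : ℕ) (f : Fin (n + 1) → Seq M β), 0 < n ∧ f 0 = X' ∧ f (Fin.last n) = Y ∧
      (∀ i, Infinite (f i).idx ∧ #(f i).idx < κ) ∧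
      ∀ j : Fin n, SimSeq L M A (f j.castSucc) (f j.succ) := by
  induction h using Relation.TransGen.head_induction_on generalizing X' with
  | single hXY =>
    refine ⟨1, ![X', Y], one_pos, rfl, rfl, ?_, fun j => ?_⟩
    · exact Fin.forall_fin_two.2 ⟨⟨hX'inf, hX'sm⟩, ⟨hXY.2.1, hY⟩⟩
    · fin_cases j
      exact hXY.mono hX' (SubSeq.refl Y) hX'inf hXY.2.1
  | head hXZ _ ih =>
    obtain ⟨Z', hZ', hZ'inf, hZ'cnt⟩ := exists_countable_subSeq hXZ.2.1
    obtain ⟨n, f, -, hf0, hfn, hf, hsim⟩ := ih hZ' hZ'inf (hZ'cnt.trans_lt hκ)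
    refine ⟨n + 1, Fin.cons X' f, n.succ_pos, rfl, ?_, fun i => ?_, fun j => ?_⟩
    · rw [← Fin.succ_last, Fin.cons_succ, hfn]
    · cases i using Fin.cases with
      | zero => exact ⟨hX'inf, hX'sm⟩
      | succ i => exact hf i
    · cases j using Fin.cases with
      | zero => simpa [hf0] using hXZ.mono hX' hZ' hX'inf hZ'inf
      | succ j => simpa [← Fin.succ_castSucc] using hsim j

end Sequences

section Compactness

variable {κ : Cardinal.{u}} (mon : Monster L M κ) {A : Set M} (hA : #A < κ)
include mon hA

theorem Monster.exists_forall_sameTypeOver {P B : Type u} (hP : #P < κ) (hB : #B < κ)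
    (par : P → M) {D : Type*} {ar : D → Type u} (lhs rhs : ∀ d, ar d → P ⊕ B)
    (hfin : ∀ G : Finset D, ∃ b : B → M, ∀ d ∈ G,
      SameTypeOver L M A (Sum.elim par b ∘ lhs d) (Sum.elim par b ∘ rhs d)) :
    ∃ b : B → M, ∀ d,
      SameTypeOver L M A (Sum.elim par b ∘ lhs d) (Sum.elim par b ∘ rhs d) := by
  classical
  -- demand `d` and formula `φ` become one formula over `A ∪ par` in the unknowns `B`
  let slot : ∀ d, (ar d → P ⊕ B) → A ⊕ ar d → (A ⊕ P) ⊕ B := fun _ u =>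
    Sum.elim (Sum.inl ∘ Sum.inl) (Sum.elim (Sum.inl ∘ Sum.inr) Sum.inr ∘ u)
  let ψ : (Σ d, L.Formula (A ⊕ ar d)) → L.Formula ((A ⊕ P) ⊕ B) := fun x =>
    (x.2.relabel (slot x.1 (lhs x.1))).iff (x.2.relabel (slot x.1 (rhs x.1)))
  have hslot : ∀ b d u, Sum.elim (Sum.elim (Subtype.val : A → M) par) b ∘ slot d u =
      Sum.elim Subtype.val (Sum.elim par b ∘ u) := by
    intro b d u
    funext z
    rcases z with z | z
    · rfl
    · simp only [slot, Function.comp_apply, Sum.elim_inr]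
      rcases u z with x | x <;> rfl
  have hψ : ∀ b x, (ψ x).Realize (Sum.elim (Sum.elim Subtype.val par) b) ↔
      (x.2.Realize (Sum.elim Subtype.val (Sum.elim par b ∘ lhs x.1)) ↔
        x.2.Realize (Sum.elim Subtype.val (Sum.elim par b ∘ rhs x.1))) := by
    intro b x
    simp only [ψ, Language.Formula.realize_iff, Language.Formula.realize_relabel, hslot]
  have hfin' : ∀ s : Finset (L.Formula ((A ⊕ P) ⊕ B)), ↑s ⊆ Set.range ψ →
      ∃ b : B → M, ∀ φ ∈ s, φ.Realize (Sum.elim (Sum.elim Subtype.val par) b) := by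
    intro s hs
    obtain ⟨t, -, rfl⟩ := Finset.subset_set_image_iff.1 (Set.image_univ.symm ▸ hs)
    obtain ⟨b, hb⟩ := hfin (t.image Sigma.fst)
    refine ⟨b, fun φ hφ => ?_⟩
    obtain ⟨x, hx, rfl⟩ := Finset.mem_image.1 hφ
    exact (hψ b x).2 (hb x.1 (Finset.mem_image_of_mem _ hx) x.2)
  obtain ⟨b, hb⟩ := mon.saturated (A ⊕ P) B (mk_sum_lt mon.isRegular.aleph0_le hA hP) hB
    (Sum.elim Subtype.val par) (Set.range ψ) hfin'
  exact ⟨b, fun d φ => (hψ b ⟨d, φ⟩).1 (hb _ ⟨_, rfl⟩)⟩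

variable {β : Type u} (hβ : #β < κ)
include hβ

-- Entry `z` of the `j`-th sequence is `P i` if `pos j z = inl i`, and the unknown `W t` if
-- `pos j z = inr t`.
theorem Monster.exists_forall_indiscOver_of_finite {ι T : Type u} (hι : #ι < κ) (hT : #T < κ)
    (P : ι → β → M) {J : Type*} {Z : J → Type u} [∀ j, LinearOrder (Z j)]
    (pos : ∀ j, Z j → ι ⊕ T)
    (hfin : ∀ F : Finset (ι ⊕ T), ∃ W : T → β → M, ∀ j,
      IndiscOver L M A (fun z : {z : Z j // pos j z ∈ F} => Sum.elim P W (pos j z))) :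
    ∃ W : T → β → M, ∀ j, IndiscOver L M A (fun z : Z j => Sum.elim P W (pos j z)) := by
  classical
  let slot : ∀ j {n : ℕ}, (Fin n → Z j) → Fin n × β → (ι × β) ⊕ (T × β) := fun j _ s p =>
    Sum.map (·, p.2) (·, p.2) (pos j (s p.1))
  have hslot : ∀ (W : T → β → M) (j) {n : ℕ} (s : Fin n → Z j),
      flatten M (fun z => Sum.elim P W (pos j z)) s =
        Sum.elim (fun q : ι × β => P q.1 q.2) (fun q : T × β => W q.1 q.2) ∘ slot j s := by
    intro W j n s
    funext p
    simp only [flatten, slot, Function.comp_apply]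
    rcases pos j (s p.1) with i | t <;> rfl
  let D := Σ j, Σ n : ℕ,
    {st : (Fin n → Z j) × (Fin n → Z j) // StrictMono st.1 ∧ StrictMono st.2}
  obtain ⟨w, hw⟩ := mon.exists_forall_sameTypeOver hA (mk_prod_lt mon.isRegular.aleph0_le hι hβ)
    (mk_prod_lt mon.isRegular.aleph0_le hT hβ) (fun q : ι × β => P q.1 q.2) (D := D)
    (ar := fun d => Fin d.2.1 × β) (fun d => slot d.1 d.2.2.1.1) (fun d => slot d.1 d.2.2.1.2)
    fun G => by
      let F := G.biUnion fun d =>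
        Finset.univ.image (pos d.1 ∘ d.2.2.1.1) ∪ Finset.univ.image (pos d.1 ∘ d.2.2.1.2)
      obtain ⟨W, hW⟩ := hfin F
      refine ⟨fun q => W q.1 q.2, ?_⟩
      rintro ⟨j, n, ⟨s, t⟩, hs, ht⟩ hG
      have hsF : ∀ i, pos j (s i) ∈ F := fun i => Finset.mem_biUnion.2
        ⟨_, hG, Finset.mem_union_left _ (Finset.mem_image_of_mem _ (Finset.mem_univ i))⟩
      have htF : ∀ i, pos j (t i) ∈ F := fun i => Finset.mem_biUnion.2
        ⟨_, hG, Finset.mem_union_right _ (Finset.mem_image_of_mem _ (Finset.mem_univ i))⟩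
      rw [← hslot, ← hslot]
      exact hW j n (fun i => ⟨s i, hsF i⟩) (fun i => ⟨t i, htF i⟩) hs ht
  refine ⟨fun t x => w (t, x), fun j n s t hs ht => ?_⟩
  rw [hslot, hslot]
  exact hw ⟨j, n, (s, t), hs, ht⟩

theorem Monster.exists_indiscOver_concat_right_restrict {H : Seq M β} (hH : Infinite H.idx)
    (hHind : IndiscOver L M A H.val) {T : Type u} [LinearOrder T] (F : Finset (H.idx ⊕ T)) :
    ∃ W : T → β → M, IndiscOver L M A
      (fun z : {z : H.idx ⊕ₗ T // ofLex z ∈ F} => Sum.elim H.val W (ofLex z.1)) := by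
  obtain ⟨g, hg⟩ := exists_strictMonoOn_of_finite (γ := H.idx)
    (F.finite_toSet.preimage (ofLex (α := H.idx ⊕ T)).injective.injOn)
  -- `g` moves the finite part of `H` mentioned in `F`; an automorphism over `A` moves it back
  have : Finite {h : H.idx // Sum.inl h ∈ F} :=
    (F.finite_toSet.preimage Sum.inl_injective.injOn).to_subtype
  obtain ⟨σ, hσA, hσ⟩ := mon.exists_equiv_of_sameTypeOver hA
    (mk_prod_lt mon.isRegular.aleph0_le
      (Cardinal.mk_lt_aleph0.trans_le mon.isRegular.aleph0_le) hβ)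
    (hHind.sameTypeOver_of_finite (s := fun h : {h // Sum.inl h ∈ F} => g (toLex (Sum.inl h.1)))
      (t := Subtype.val) (fun a b hab => hg a.2 b.2 (Sum.Lex.inl_lt_inl_iff.2 hab))
      (Subtype.strictMono_coe _))
  refine ⟨fun t x => σ (H.val (g (toLex (Sum.inr t))) x), ?_⟩
  have heq : (fun z : {z : H.idx ⊕ₗ T // ofLex z ∈ F} =>
      Sum.elim H.val (fun t x => σ (H.val (g (toLex (Sum.inr t))) x)) (ofLex z.1)) =
      fun z x => σ (H.val (g z.1) x) := by
    funext ⟨z, hz⟩ x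
    rcases z with h | t
    · exact (hσ (⟨h, hz⟩, x)).symm
    · rfl
  rw [heq]
  exact (hHind.comp (g := fun z : {z : H.idx ⊕ₗ T // ofLex z ∈ F} => g z.1)
    fun a b hab => hg a.2 b.2 hab).map_equiv σ hσA

theorem Monster.exists_indiscOver_concat_right {H : Seq M β} (hH : Infinite H.idx)
    (hHsm : #H.idx < κ) (hHind : IndiscOver L M A H.val) (T : Type u) [LinearOrder T]
    (hT : #T < κ) : ∃ v : T → β → M, IndiscOver L M A (H.concat ⟨T, v⟩).val := by
  obtain ⟨W, hW⟩ := mon.exists_forall_indiscOver_of_finite hA hβ hHsm hT H.val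
    (J := PUnit.{1}) (Z := fun _ => H.idx ⊕ₗ T) (fun _ => ofLex) fun F =>
      (mon.exists_indiscOver_concat_right_restrict hA hβ hH hHind F).imp fun _ h _ => h
  exact ⟨W, hW PUnit.unit⟩

theorem Monster.exists_indiscOver_concat_left {K : Seq M β} (hK : Infinite K.idx) {J : Type u}
    (hJ : #J < κ) (Lc : J → Seq M β) (hLc : ∀ j, #(Lc j).idx < κ)
    (hind : ∀ j, IndiscOver L M A (K.concat (Lc j)).val) (T : Type u) [LinearOrder T]
    (hT : #T < κ) :
    ∃ v : T → β → M, ∀ j, IndiscOver L M A ((⟨T, v⟩ : Seq M β).concat (Lc j)).val := by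
  let pos : ∀ j, T ⊕ₗ (Lc j).idx → (Σ j, (Lc j).idx) ⊕ T := fun j z =>
    Sum.elim Sum.inr (fun i => Sum.inl ⟨j, i⟩) (ofLex z)
  obtain ⟨W, hW⟩ := mon.exists_forall_indiscOver_of_finite hA hβ
    (by rw [Cardinal.mk_sigma]; exact Cardinal.sum_lt_of_isRegular mon.isRegular hJ hLc) hT
    (fun p : Σ j, (Lc j).idx => (Lc p.1).val p.2) pos fun F => by
      obtain ⟨g, hg⟩ := exists_strictMonoOn_of_finite (γ := K.idx)
        (F.finite_toSet.preimage Sum.inr_injective.injOn)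
      -- the finitely many unknowns mentioned in `F` are sampled from `K`
      refine ⟨fun t => K.val (g t), fun j => ?_⟩
      have hmem : ∀ z : {z // pos j z ∈ F}, ∀ t, ofLex z.1 = Sum.inl t → Sum.inr t ∈ F := by
        rintro ⟨z, hz⟩ t rfl
        exact hz
      convert (hind j).comp (g := fun z : {z // pos j z ∈ F} => toLex (Sum.map g id (ofLex z.1)))
        (fun a b hab => strictMonoOn_lexMap hg strictMono_id (hmem a) (hmem b) hab) using 1
      funext ⟨z, hz⟩
      rcases z with t | i <;> rfl
  refine ⟨W, fun j => ?_⟩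
  have hval : ((⟨T, W⟩ : Seq M β).concat (Lc j)).val =
      fun z => Sum.elim (fun p : Σ j, (Lc j).idx => (Lc p.1).val p.2) W (pos j z) := by
    funext z
    rcases z with t | i <;> rfl
  rw [hval]
  exact hW j

end Compactness

section Chains

variable {κ : Cardinal.{u}} (mon : Monster L M κ) {A : Set M} (hA : #A < κ) {β : Type u}
  (hβ : #β < κ)
include mon hA hβ

theorem SimSeq.exists_common_tail {X Y : Seq M β} (h : SimSeq L M A X Y) (hX : #X.idx < κ)
    (hY : #Y.idx < κ) (T : Type u) [LinearOrder T] (hT : #T < κ) :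
    ∃ v : T → β → M, IndiscOver L M A (X.concat ⟨T, v⟩).val ∧
      IndiscOver L M A (Y.concat ⟨T, v⟩).val := by
  have key : ∀ X Y : Seq M β, Infinite X.idx → #X.idx < κ → #Y.idx < κ →
      IndiscOver L M A (X.concat Y).val → ∃ v : T → β → M,
        IndiscOver L M A (X.concat ⟨T, v⟩).val ∧ IndiscOver L M A (Y.concat ⟨T, v⟩).val := by
    intro X Y hXinf hXsm hYsm hXY
    obtain ⟨v, hv⟩ := mon.exists_indiscOver_concat_right hA hβ (H := X.concat Y)
      (Sum.infinite_of_left : Infinite (X.idx ⊕ Y.idx))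
      (mk_sum_lt mon.isRegular.aleph0_le hXsm hYsm) hXY T hT
    exact ⟨v, hv.concat_of_subSeq (subSeq_concat_left X Y) (SubSeq.refl _),
      hv.concat_of_subSeq (subSeq_concat_right X Y) (SubSeq.refl _)⟩
  obtain ⟨hXinf, hYinf, hXY | hYX⟩ := h
  · exact key X Y hXinf hX hY hXY
  · exact (key Y X hYinf hY hX hYX).imp fun _ => And.symm

theorem Monster.approxSeq_self {I : Seq M β} (hI : Infinite I.idx) (hIsm : #I.idx < κ)
    (hIind : IndiscOver L M A I.val) : ApproxSeq L M A I I := by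
  obtain ⟨v, hv⟩ := mon.exists_indiscOver_concat_right hA hβ hI hIsm hIind (ULift.{u} ℕ)
    (by simpa using mon.aleph0_lt)
  exact .tail (.single ⟨hI, inferInstance, .inl hv⟩) ⟨inferInstance, hI, .inr hv⟩

theorem Monster.exists_chain_of_tails {n : ℕ} (f : Fin (n + 1) → Seq M β)
    (Lc : Fin n → Seq M β) (hf : ∀ i, Infinite (f i).idx) (hLc : ∀ j, #(Lc j).idx < κ)
    (hind : ∀ j, IndiscOver L M A ((f j.castSucc).concat (Lc j)).val ∧
      IndiscOver L M A ((f j.succ).concat (Lc j)).val)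
    (O : Type u) [LinearOrder O] (hO : #O < κ) :
    ∃ K : Fin (n + 1) → Seq M β, K 0 = f 0 ∧ K (Fin.last n) = f (Fin.last n) ∧
      (∀ i : Fin (n + 1), 0 < (i : ℕ) → (i : ℕ) < n → Nonempty ((K i).idx ≃o O)) ∧
      ∀ j, IndiscOver L M A ((K j.castSucc).concat (Lc j)).val ∧
        IndiscOver L M A ((K j.succ).concat (Lc j)).val := by
  let Adj (i : Fin (n + 1)) (j : Fin n) : Prop := j.castSucc = i ∨ j.succ = i
  have hadj : ∀ i j, Adj i j → IndiscOver L M A ((f i).concat (Lc j)).val := by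
    rintro i j (rfl | rfl)
    exacts [(hind j).1, (hind j).2]
  have hrep : ∀ i, ∃ v : O → β → M,
      ∀ j, Adj i j → IndiscOver L M A ((⟨O, v⟩ : Seq M β).concat (Lc j)).val := by
    intro i
    obtain ⟨v, hv⟩ := mon.exists_indiscOver_concat_left hA hβ (hf i)
      (J := ULift.{u} {j // Adj i j}) (Cardinal.mk_lt_aleph0.trans mon.aleph0_lt)
      (fun j => Lc j.down.1) (fun _ => hLc _) (fun j => hadj i _ j.down.2) O hO
    exact ⟨v, fun j hj => hv ⟨j, hj⟩⟩
  choose v hv using hrep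
  let K i := if i = 0 ∨ i = Fin.last n then f i else ⟨O, v i⟩
  have hK : ∀ i j, Adj i j → IndiscOver L M A ((K i).concat (Lc j)).val := by
    intro i j hij
    by_cases hi : i = 0 ∨ i = Fin.last n
    · rw [show K i = f i from if_pos hi]
      exact hadj i j hij
    · rw [show K i = ⟨O, v i⟩ from if_neg hi]
      exact hv i j hij
  refine ⟨K, if_pos (.inl rfl), if_pos (.inr rfl), fun i h0 hn => ?_,
    fun j => ⟨hK _ j (.inl rfl), hK _ j (.inr rfl)⟩⟩
  have hi : ¬(i = 0 ∨ i = Fin.last n) := by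
    rintro (rfl | rfl)
    · exact h0.ne rfl
    · exact hn.ne rfl
  rw [show K i = ⟨O, v i⟩ from if_neg hi]
  exact ⟨OrderIso.refl O⟩

end Chains

end

theorem statement_14_general (L : FirstOrder.Language.{u, u}) (M : Type u) [L.Structure M]
    (κbar : Cardinal.{u}) (_mon : Monster L M κbar)
    (A : Set M) (hA : #A < κbar) {β : Type u} (hβ : #β < κbar)
    (I J : Seq M β) (hIsm : #I.idx < κbar) (hJsm : #J.idx < κbar)
    (hIinf : Infinite I.idx) (hJinf : Infinite J.idx)
    (hIind : IndiscOver L M A I.val)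
    (O O' : Type u) [LinearOrder O] [LinearOrder O']
    (hO : Infinite O) (hO' : Infinite O') (hOsm : #O < κbar) (hO'sm : #O' < κbar) :
    ApproxSeq L M A I J ↔
      ∃ (n : ℕ) (K : Fin (n + 1) → Seq M β) (Lc : Fin n → Seq M β),
        K 0 = I ∧ K (Fin.last n) = J ∧
        (∀ i : Fin (n + 1), 0 < (i : ℕ) → (i : ℕ) < n → Nonempty ((K i).idx ≃o O)) ∧
        (∀ i : Fin n, Nonempty ((Lc i).idx ≃o O')) ∧
        ∀ i : Fin n,
          IndiscOver L M A ((K i.castSucc).concat (Lc i)).val ∧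
          IndiscOver L M A ((K i.succ).concat (Lc i)).val := by
  constructor
  · intro happ
    obtain ⟨n, f, -, hf0, hfn, hf, hsim⟩ :=
      happ.exists_small_path _mon.aleph0_lt hJsm (SubSeq.refl I) hIinf hIsm
    choose v hv using fun j =>
      (hsim j).exists_common_tail _mon hA hβ (hf _).2 (hf _).2 O' hO'sm
    obtain ⟨K, hK0, hKn, hKO, hK⟩ := _mon.exists_chain_of_tails hA hβ f (fun j => ⟨O', v j⟩)
      (fun i => (hf i).1) (fun _ => hO'sm) hv O hOsm
    exact ⟨n, K, _, hK0.trans hf0, hKn.trans hfn, hKO, fun _ => ⟨OrderIso.refl O'⟩, hK⟩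
  · rintro ⟨n, K, Lc, rfl, rfl, hKO, hLO', hK⟩
    have hKinf : ∀ i, Infinite (K i).idx := by
      intro i
      by_cases h0 : i = 0
      · exact h0 ▸ hIinf
      by_cases hn : i = Fin.last n
      · exact hn ▸ hJinf
      obtain ⟨e⟩ := hKO i (Nat.pos_of_ne_zero fun h => h0 (Fin.ext h)) (Fin.val_lt_last hn)
      exact Infinite.of_injective e.symm e.symm.injective
    have hLinf : ∀ j, Infinite (Lc j).idx := fun j =>
      (hLO' j).elim fun e => Infinite.of_injective e.symm e.symm.injective
    have hstep : ∀ j : Fin n, ApproxSeq L M A (K j.castSucc) (K j.succ) := fun j =>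
      .tail (.single ⟨hKinf _, hLinf j, .inl (hK j).1⟩) ⟨hLinf j, hKinf _, .inr (hK j).2⟩
    refine (_mon.approxSeq_self hA hβ hIinf hIsm hIind).trans_left ?_
    rw [← Relation.reflTransGen_transGen]
    exact reflTransGen_of_fin_chain K hstep

/-- For infinite `A`-indiscernible sequences `I`, `J` and
infinite order types `O`, `O'`: `I ≈_A J` iff there is a chain
`K₀, L₀, K₁, …, L_{n−1}, K_n` from `I` to `J` with the inner `K_i` of order type
`O`, the `L_i` of order type `O'`, and `K_i + L_i`, `K_{i+1} + L_i` all
`A`-indiscernible. -/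
theorem statement_14 (L : FirstOrder.Language.{u, u}) (M : Type u) [L.Structure M]
    (κbar : Cardinal.{u}) (_mon : Monster L M κbar)
    (A : Set M) (hA : #A < κbar) {β : Type u} (hβ : #β < κbar)
    (I J : Seq M β) (hIsm : #I.idx < κbar) (hJsm : #J.idx < κbar)
    (hIinf : Infinite I.idx) (hJinf : Infinite J.idx)
    (hIind : IndiscOver L M A I.val) (hJind : IndiscOver L M A J.val)
    (O O' : Type u) [LinearOrder O] [LinearOrder O']
    (hO : Infinite O) (hO' : Infinite O') (hOsm : #O < κbar) (hO'sm : #O' < κbar) :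
    ApproxSeq L M A I J ↔
      ∃ (n : ℕ) (K : Fin (n + 1) → Seq M β) (Lc : Fin n → Seq M β),
        K 0 = I ∧ K (Fin.last n) = J ∧
        (∀ i : Fin (n + 1), 0 < (i : ℕ) → (i : ℕ) < n → Nonempty ((K i).idx ≃o O)) ∧
        (∀ i : Fin n, Nonempty ((Lc i).idx ≃o O')) ∧
        ∀ i : Fin n,
          IndiscOver L M A ((K i.castSucc).concat (Lc i)).val ∧
          IndiscOver L M A ((K i.succ).concat (Lc i)).val :=
  statement_14_general L M κbar _mon A hA hβ I J hIsm hJsm hIinf hJinf hIind O O' hO hO' hOsm hO'sm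

end BddUltra
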